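/- arXiv:2011.07197 — 5 statements merged into one kernel-verified Lean document; each statement's English description precedes it below -/
import Mathlib

section
/- Let X be a real 3×3 matrix of rank 2, let t ∈ ℝ³ be a nonzero vector with tᵀ X = 0, and let u, v ∈ ℝ³ be nonzero with vᵀ X u = 0. If vᵀ [-t]ₓ X u = 0, then X u = 0 or vᵀ X = 0. -/
open Matrix

/-- The skew-symmetric matrix representing the cross product with `t`. -/
def crossMat (t : Fin 3 → ℝ) : Matrix (Fin 3) (Fin 3) ℝ :=
  !![0, -t 2, t 1; t 2, 0, -t 0; -t 1, t 0, 0]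

lemma collinear_lemma (t w v : Fin 3 → ℝ) (htt : t ⬝ᵥ t ≠ 0) (hww : w ⬝ᵥ w ≠ 0)
    (h1 : t ⬝ᵥ w = 0) (h2 : v ⬝ᵥ w = 0) (h3 : v ⬝ᵥ (crossMat (-t)).mulVec w = 0) :
    ∃ c : ℝ, v = c • t := by
  refine ⟨(v ⬝ᵥ t) / (t ⬝ᵥ t), ?_⟩
  simp only [dotProduct, Fin.sum_univ_three] at h1 h2 htt hww
  simp [crossMat, Matrix.mulVec, dotProduct, Fin.sum_univ_three] at h3
  have key : ∀ i : Fin 3, (w 0 * w 0 + w 1 * w 1 + w 2 * w 2) *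
      ((t 0 * t 0 + t 1 * t 1 + t 2 * t 2) * v i
        - (v 0 * t 0 + v 1 * t 1 + v 2 * t 2) * t i) = 0 := by
    intro i
    fin_cases i
    · show (w 0 * w 0 + w 1 * w 1 + w 2 * w 2) *
        ((t 0 * t 0 + t 1 * t 1 + t 2 * t 2) * v 0
          - (v 0 * t 0 + v 1 * t 1 + v 2 * t 2) * t 0) = 0
      linear_combination ((t 0 * w 0 + t 1 * w 1 + t 2 * w 2) * v 0
          - (v 0 * w 0 + v 1 * w 1 + v 2 * w 2) * t 0
          - (v 0 * t 0 + v 1 * t 1 + v 2 * t 2) * w 0) * h1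
        + ((t 0 * t 0 + t 1 * t 1 + t 2 * t 2) * w 0) * h2
        - (t 1 * w 2 - t 2 * w 1) * h3
    · show (w 0 * w 0 + w 1 * w 1 + w 2 * w 2) *
        ((t 0 * t 0 + t 1 * t 1 + t 2 * t 2) * v 1
          - (v 0 * t 0 + v 1 * t 1 + v 2 * t 2) * t 1) = 0
      linear_combination ((t 0 * w 0 + t 1 * w 1 + t 2 * w 2) * v 1
          - (v 0 * w 0 + v 1 * w 1 + v 2 * w 2) * t 1
          - (v 0 * t 0 + v 1 * t 1 + v 2 * t 2) * w 1) * h1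
        + ((t 0 * t 0 + t 1 * t 1 + t 2 * t 2) * w 1) * h2
        - (t 2 * w 0 - t 0 * w 2) * h3
    · show (w 0 * w 0 + w 1 * w 1 + w 2 * w 2) *
        ((t 0 * t 0 + t 1 * t 1 + t 2 * t 2) * v 2
          - (v 0 * t 0 + v 1 * t 1 + v 2 * t 2) * t 2) = 0
      linear_combination ((t 0 * w 0 + t 1 * w 1 + t 2 * w 2) * v 2
          - (v 0 * w 0 + v 1 * w 1 + v 2 * w 2) * t 2
          - (v 0 * t 0 + v 1 * t 1 + v 2 * t 2) * w 2) * h1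
        + ((t 0 * t 0 + t 1 * t 1 + t 2 * t 2) * w 2) * h2
        - (t 0 * w 1 - t 1 * w 0) * h3
  funext i
  have h4 : (t 0 * t 0 + t 1 * t 1 + t 2 * t 2) * v i
      - (v 0 * t 0 + v 1 * t 1 + v 2 * t 2) * t i = 0 := by
    rcases mul_eq_zero.1 (key i) with h | h
    · exact absurd h hww
    · exact h
  show v i = (v ⬝ᵥ t) / (t ⬝ᵥ t) * t i
  simp only [dotProduct, Fin.sum_univ_three]
  rw [div_mul_eq_mul_div, eq_div_iff htt]
  linear_combination h4

theorem chiral_polynomial_zeros (X : Matrix (Fin 3) (Fin 3) ℝ) (hX : X.rank = 2)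
    (t : Fin 3 → ℝ) (ht : t ≠ 0) (htX : X.vecMul t = 0)
    (u v : Fin 3 → ℝ) (hu : u ≠ 0) (hv : v ≠ 0)
    (huv : v ⬝ᵥ X.mulVec u = 0)
    (hg : v ⬝ᵥ (crossMat (-t) * X).mulVec u = 0) :
    X.mulVec u = 0 ∨ X.vecMul v = 0 := by
  by_cases hXu : X.mulVec u = 0
  · exact Or.inl hXu
  right
  set w := X.mulVec u with hw
  have h1 : t ⬝ᵥ w = 0 := by
    rw [hw, Matrix.dotProduct_mulVec, htX, zero_dotProduct]
  have h3 : v ⬝ᵥ (crossMat (-t)).mulVec w = 0 := by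
    rw [hw, Matrix.mulVec_mulVec]; exact hg
  have htt : t ⬝ᵥ t ≠ 0 := fun h => ht (dotProduct_self_eq_zero.mp h)
  have hww : w ⬝ᵥ w ≠ 0 := fun h => hXu (dotProduct_self_eq_zero.mp h)
  obtain ⟨c, rfl⟩ := collinear_lemma t w v htt hww h1 huv h3
  rw [Matrix.smul_vecMul, htX, smul_zero]
end

section
/- Let X = [t]ₓ G with t ∈ ℝ³ nonzero and G ∈ GL₃(ℝ). Then adj(X)·t = ‖t‖² det(G) (G⁻¹ t), where adj denotes the classical adjugate. In particular, adj(X)·t is a nonzero multiple of G⁻¹t and spans the right kernel of X. -/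
open Matrix

lemma adjugate_crossMat (t : Fin 3 → ℝ) :
    (crossMat t).adjugate = vecMulVec t t := by
  rw [crossMat, adjugate_fin_three_of]
  ext i j
  fin_cases i <;> fin_cases j <;> simp [vecMulVec_apply] <;> ring

lemma det_crossMat (t : Fin 3 → ℝ) : (crossMat t).det = 0 := by
  simp [crossMat, det_fin_three]; ring

theorem adjugate_fundamental_matrix (t : Fin 3 → ℝ) (ht : t ≠ 0)
    (G : Matrix (Fin 3) (Fin 3) ℝ) (hG : IsUnit G.det) :
    (crossMat t * G).adjugate.mulVec t = ((t ⬝ᵥ t) * G.det) • G⁻¹.mulVec t ∧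
    (crossMat t * G).adjugate.mulVec t ≠ 0 ∧
    (crossMat t * G).mulVec ((crossMat t * G).adjugate.mulVec t) = 0 := by
  have hadj : (crossMat t * G).adjugate = G.adjugate * vecMulVec t t := by
    rw [adjugate_mul_distrib, adjugate_crossMat]
  have hGadj : G.adjugate = G.det • G⁻¹ := by
    rw [Matrix.inv_def, smul_smul, Ring.mul_inverse_cancel _ hG, one_smul]
  have hmain : (crossMat t * G).adjugate.mulVec t = ((t ⬝ᵥ t) * G.det) • G⁻¹.mulVec t := by
    rw [hadj, ← mulVec_mulVec]
    have h1 : (vecMulVec t t).mulVec t = (t ⬝ᵥ t) • t := by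
      ext i
      simp [vecMulVec_apply, mulVec, dotProduct, Finset.sum_mul]; apply Finset.sum_congr rfl; intros; ring
    rw [h1, mulVec_smul, hGadj, smul_mulVec, smul_smul, mul_comm]
  refine ⟨hmain, ?_, ?_⟩
  · rw [hmain]
    have htt : t ⬝ᵥ t ≠ 0 := by
      intro h
      apply ht
      ext i
      have := dotProduct_self_eq_zero.mp h
      exact congrFun this i
    have hdet : G.det ≠ 0 := hG.ne_zero
    have hGinvt : G⁻¹.mulVec t ≠ 0 := by
      intro h
      apply ht
      have : G.mulVec (G⁻¹.mulVec t) = 0 := by rw [h, mulVec_zero]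
      rwa [mulVec_mulVec, Matrix.mul_nonsing_inv _ hG, one_mulVec] at this
    simp only [ne_eq, smul_eq_zero, mul_eq_zero, not_or]
    exact ⟨⟨htt, hdet⟩, hGinvt⟩
  · rw [mulVec_mulVec, mul_adjugate, det_mul, det_crossMat, zero_mul, zero_smul,
      zero_mulVec]
end

section
/- Let v_l, v_r, t ∈ ℝ³ lie on a common affine line L (all with last coordinate 1), and suppose t does not lie in the convex cone generated by v_l and v_r. Then for all nonzero w₁, w₂ in the cone generated by v_l and v_r, (t × w₁)ᵀ (t × w₂) > 0. -/
/-!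
Write the line through `t` as `t + ℝ v`, with `vl = r • v + t` and `vr = q • v + t`. Since
`t × t = 0`, the map `w ↦ t × w` sends `a • vl + b • vr` to `(a r + b q) • (t × v)`, so the
quadratic form is `c₁ c₂ ‖t × v‖²`. If `r q ≤ 0` then `t` would lie between `vl` and `vr`,
hence in their cone; so `r q > 0` and every nonzero `c` arising from the cone has the sign of
`r`. Finally `t × v ≠ 0` because `v` is horizontal (`v 2 = 0`, as `vl 2 = t 2`) while `t 2 = 1`.
-/

open Matrix

/-- The convex cone generated by two vectors. -/
def cone (v₁ v₂ : Fin 3 → ℝ) : Set (Fin 3 → ℝ) :=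
  {x | ∃ l₁ l₂ : ℝ, 0 ≤ l₁ ∧ 0 ≤ l₂ ∧ x = l₁ • v₁ + l₂ • v₂}

lemma left_mem_cone (v₁ v₂ : Fin 3 → ℝ) : v₁ ∈ cone v₁ v₂ :=
  ⟨1, 0, zero_le_one, le_rfl, by simp⟩

lemma mem_cone_of_mul_nonpos {t v : Fin 3 → ℝ} {r q : ℝ} (hrq : r * q ≤ 0) :
    t ∈ cone (r • v + t) (q • v + t) := by
  rcases eq_or_ne r 0 with rfl | hr
  · simpa using left_mem_cone t (q • v + t)
  have hqr : q - r ≠ 0 := by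
    intro h
    obtain rfl := sub_eq_zero.mp h
    linarith [mul_self_pos.mpr hr]
  -- `q • (r • v + t) - r • (q • v + t) = (q - r) • t`
  refine ⟨q / (q - r), -r / (q - r), ?_, ?_, ?_⟩
  · rw [← mul_div_mul_right _ _ hqr]
    exact div_nonneg (by nlinarith [mul_self_nonneg q, mul_self_nonneg r]) (mul_self_nonneg _)
  · rw [← mul_div_mul_right _ _ hqr]
    exact div_nonneg (by nlinarith [mul_self_nonneg q, mul_self_nonneg r]) (mul_self_nonneg _)
  · ext i
    simp only [Pi.add_apply, Pi.smul_apply, smul_eq_mul]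
    field_simp
    ring

lemma cross_ne_zero_of_apply_two {F : Type*} [Field F] {t v : Fin 3 → F}
    (ht : t 2 ≠ 0) (hv2 : v 2 = 0) (hv : v ≠ 0) : crossProduct t v ≠ 0 := by
  rw [← cross_anticomm, neg_ne_zero, crossProduct_ne_zero_iff_linearIndependent,
    LinearIndependent.pair_iff' hv]
  intro a h
  simp [← h, hv2] at ht

lemma cross_eq_smul_of_mem_cone {t v w : Fin 3 → ℝ} {r q : ℝ} (hrq : 0 < r * q)
    (hw : w ∈ cone (r • v + t) (q • v + t)) (hw0 : w ≠ 0) :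
    ∃ c, 0 < r * c ∧ crossProduct t w = c • crossProduct t v := by
  obtain ⟨a, b, ha, hb, rfl⟩ := hw
  have hab : 0 < a ∨ 0 < b := by
    by_contra! h
    exact hw0 (by simp [le_antisymm h.1 ha, le_antisymm h.2 hb])
  refine ⟨a * r + b * q, ?_, ?_⟩
  · have hr : 0 < r * r := mul_self_pos.mpr (left_ne_zero_of_mul hrq.ne')
    rcases hab with ha' | hb' <;> nlinarith
  · simp only [map_add, map_smul, cross_self, smul_zero, add_zero, smul_add, smul_smul, add_smul]

theorem cross_quad_product_pos_general (vl vr t : Fin 3 → ℝ)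
    (hvl : vl 2 = 1) (ht : t 2 = 1)
    (hcol : Collinear ℝ ({vl, vr, t} : Set (Fin 3 → ℝ)))
    (htc : t ∉ cone vl vr) :
    ∀ w₁ ∈ cone vl vr, ∀ w₂ ∈ cone vl vr, w₁ ≠ 0 → w₂ ≠ 0 →
      0 < crossProduct t w₁ ⬝ᵥ crossProduct t w₂ := by
  intro w₁ hw₁ w₂ hw₂ hw₁0 hw₂0
  obtain ⟨v, hv⟩ := (collinear_iff_of_mem (p₀ := t) (by simp)).mp hcol
  obtain ⟨r, rfl⟩ := hv vl (by simp)
  obtain ⟨q, rfl⟩ := hv vr (by simp)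
  simp only [vadd_eq_add] at *
  have hrq : 0 < r * q := by
    by_contra! h
    exact htc (mem_cone_of_mul_nonpos h)
  have hv0 : v ≠ 0 := by
    rintro rfl
    exact htc (by simpa using left_mem_cone t t)
  have hv2 : v 2 = 0 := by
    simp only [Pi.add_apply, Pi.smul_apply, smul_eq_mul, ht, add_eq_right] at hvl
    exact (mul_eq_zero.mp hvl).resolve_left (left_ne_zero_of_mul hrq.ne')
  obtain ⟨c₁, hc₁, h₁⟩ := cross_eq_smul_of_mem_cone hrq hw₁ hw₁0
  obtain ⟨c₂, hc₂, h₂⟩ := cross_eq_smul_of_mem_cone hrq hw₂ hw₂0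
  have hc : 0 < c₁ * c₂ := by nlinarith [mul_pos hc₁ hc₂, mul_self_nonneg r]
  have hcross : 0 < crossProduct t v ⬝ᵥ crossProduct t v := by
    simpa using dotProduct_star_self_pos_iff.mpr
      (cross_ne_zero_of_apply_two (by simp [ht]) hv2 hv0)
  rw [h₁, h₂, smul_dotProduct, dotProduct_smul, smul_eq_mul, smul_eq_mul, ← mul_assoc]
  exact mul_pos hc hcross

theorem cross_quad_product_pos (vl vr t : Fin 3 → ℝ)
    (hvl : vl 2 = 1) (hvr : vr 2 = 1) (ht : t 2 = 1)
    (hcol : Collinear ℝ ({vl, vr, t} : Set (Fin 3 → ℝ)))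
    (htc : t ∉ cone vl vr) :
    ∀ w₁ ∈ cone vl vr, ∀ w₂ ∈ cone vl vr, w₁ ≠ 0 → w₂ ≠ 0 →
      0 < crossProduct t w₁ ⬝ᵥ crossProduct t w₂ :=
  cross_quad_product_pos_general vl vr t hvl ht hcol htc
end

section
/- Let u₁,…,u₄ and v₁,…,v₄ be points in ℝ³ with last coordinate 1 such that both the u's and the v's are collinear (each set lies on an affine line). Then there exist t ∈ ℝ³ nonzero and G ∈ GL₃(ℝ) such that X := [t]ₓ G satisfies vᵢᵀ X uᵢ = 0 and (t × vᵢ)ᵀ(t × G uᵢ) > 0 for all i = 1,…,4. -/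
open Matrix

/-- Matrix with given columns. -/
def colMat (a b c : Fin 3 → ℝ) : Matrix (Fin 3) (Fin 3) ℝ :=
  Matrix.of fun i j => ![a, b, c] j i

lemma crossMat_mulVec (t w : Fin 3 → ℝ) :
    (crossMat t).mulVec w = crossProduct t w := by
  ext i
  fin_cases i <;>
    simp [crossMat, crossProduct, mulVec, dotProduct, Fin.sum_univ_three] <;> ring

lemma det_colMat_cross (a b : Fin 3 → ℝ) :
    (colMat a b (crossProduct a b)).det = crossProduct a b ⬝ᵥ crossProduct a b := by
  simp [colMat, Matrix.det_fin_three, crossProduct, dotProduct, Fin.sum_univ_three]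
  ring

lemma cross_ne_zero (a b : Fin 3 → ℝ) (ha2 : a 2 = 0) (hb2 : b 2 = 1) (ha : a ≠ 0) :
    crossProduct a b ≠ 0 := by
  intro h
  apply ha
  have h0 := congrFun h 0
  have h1 := congrFun h 1
  simp [crossProduct, ha2, hb2] at h0 h1
  ext i
  fin_cases i <;> simp [h0, h1, ha2]

lemma dot_self_pos (w : Fin 3 → ℝ) (hw : w ≠ 0) : 0 < w ⬝ᵥ w := by
  have h0 : 0 ≤ w ⬝ᵥ w := by
    simp only [dotProduct, Fin.sum_univ_three]
    nlinarith [mul_self_nonneg (w 0), mul_self_nonneg (w 1), mul_self_nonneg (w 2)]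
  rcases h0.lt_or_eq with h | h
  · exact h
  · exact absurd (dotProduct_self_eq_zero.mp h.symm) hw

lemma colMat_mulVec (a b c : Fin 3 → ℝ) (y : ℝ) :
    (colMat a b c).mulVec ![y, 1, 0] = y • a + b := by
  ext i
  simp [colMat, mulVec, dotProduct, Fin.sum_univ_three]
  ring

/-- Points of a collinear family lie on the line through the first two points. -/
lemma exists_coeff (u : Fin 4 → (Fin 3 → ℝ)) (hucol : Collinear ℝ (Set.range u))
    (hune : u 1 ≠ u 0) : ∀ i, ∃ yi : ℝ, u i = yi • (u 1 - u 0) + u 0 := by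
  obtain ⟨du, hdu⟩ := (collinear_iff_of_mem (Set.mem_range_self 0)).mp hucol
  choose cu hcu using fun i => hdu (u i) (Set.mem_range_self i)
  simp only [vadd_eq_add] at hcu
  have h0 : cu 0 • du = 0 := add_eq_right.mp (hcu 0).symm
  have he : u 1 - u 0 = (cu 1 - cu 0) • du := by
    rw [hcu 1, sub_smul, h0, sub_zero]; abel
  have hc10 : cu 1 - cu 0 ≠ 0 := by
    intro h
    exact hune (sub_eq_zero.mp (by rw [he, h, zero_smul]))
  intro i
  refine ⟨(cu i - cu 0) / (cu 1 - cu 0), ?_⟩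
  rw [he, smul_smul, div_mul_cancel₀ _ hc10, sub_smul, h0, sub_zero]
  exact hcu i

theorem collinear_four_pairs_chiral (u v : Fin 4 → (Fin 3 → ℝ))
    (hu1 : ∀ i, u i 2 = 1) (hv1 : ∀ i, v i 2 = 1)
    (huinj : Function.Injective u) (hvinj : Function.Injective v)
    (hucol : Collinear ℝ (Set.range u)) (hvcol : Collinear ℝ (Set.range v)) :
    ∃ t : Fin 3 → ℝ, t ≠ 0 ∧ ∃ G : Matrix (Fin 3) (Fin 3) ℝ, IsUnit G.det ∧
      ∀ i, v i ⬝ᵥ (crossMat t * G).mulVec (u i) = 0 ∧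
        0 < crossProduct t (v i) ⬝ᵥ crossProduct t (G.mulVec (u i)) := by
  have h01 : (0 : Fin 4) ≠ 1 := by decide
  have hune : u 1 ≠ u 0 := fun h => h01 (huinj h.symm)
  have hvne : v 1 ≠ v 0 := fun h => h01 (hvinj h.symm)
  choose y hui using exists_coeff u hucol hune
  choose x hvi using exists_coeff v hvcol hvne
  set e : Fin 3 → ℝ := u 1 - u 0 with he
  set d : Fin 3 → ℝ := v 1 - v 0 with hd
  have hene : e ≠ 0 := sub_ne_zero.mpr hune
  have hdne : d ≠ 0 := sub_ne_zero.mpr hvne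
  have he2 : e 2 = 0 := by simp [he, hu1 0, hu1 1]
  have hd2 : d 2 = 0 := by simp [hd, hv1 0, hv1 1]
  set cA : Fin 3 → ℝ := crossProduct e (u 0) with hcA
  set cB : Fin 3 → ℝ := crossProduct d (v 0) with hcB
  have hcAne : cA ≠ 0 := cross_ne_zero e (u 0) he2 (hu1 0) hene
  have hcBne : cB ≠ 0 := cross_ne_zero d (v 0) hd2 (hv1 0) hdne
  set A : Matrix (Fin 3) (Fin 3) ℝ := colMat e (u 0) cA with hA
  set B : Matrix (Fin 3) (Fin 3) ℝ := colMat d (v 0) cB with hB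
  have hdetApos : 0 < A.det := by
    rw [hA, det_colMat_cross]; exact dot_self_pos cA hcAne
  have hdetBpos : 0 < B.det := by
    rw [hB, det_colMat_cross]; exact dot_self_pos cB hcBne
  have hAunit : IsUnit A.det := isUnit_iff_ne_zero.mpr (ne_of_gt hdetApos)
  set G : Matrix (Fin 3) (Fin 3) ℝ := B * A⁻¹ with hG
  have hdetG : IsUnit G.det := by
    rw [hG, Matrix.det_mul, Matrix.det_nonsing_inv, Ring.inverse_eq_inv']
    exact isUnit_iff_ne_zero.mpr
      (mul_ne_zero (ne_of_gt hdetBpos) (inv_ne_zero (ne_of_gt hdetApos)))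
  have hGu : ∀ i, G.mulVec (u i) = y i • d + v 0 := by
    intro i
    have h1 : A.mulVec ![y i, 1, 0] = u i := by
      rw [hA, colMat_mulVec, ← hui]
    have h2 : A⁻¹.mulVec (u i) = ![y i, 1, 0] := by
      rw [← h1, Matrix.mulVec_mulVec, Matrix.nonsing_inv_mul A hAunit, Matrix.one_mulVec]
    rw [hG, ← Matrix.mulVec_mulVec, h2, hB, colMat_mulVec]
  have hkey : ∀ z : ℝ, crossProduct d (z • d + v 0) = cB := by
    intro z
    rw [map_add, LinearMap.map_smul, cross_self, smul_zero, zero_add, hcB]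
  refine ⟨d, hdne, G, hdetG, fun i => ⟨?_, ?_⟩⟩
  · rw [← Matrix.mulVec_mulVec, crossMat_mulVec, hGu i, hkey, hvi i, hcB]
    simp only [dotProduct, crossProduct, Fin.sum_univ_three, Pi.add_apply, Pi.smul_apply,
      smul_eq_mul, LinearMap.mk₂_apply, Matrix.cons_val_zero, Matrix.cons_val_one,
      Matrix.head_cons, Matrix.cons_val_two, Matrix.tail_cons]
    ring
  · rw [hGu i, hvi i, hkey, hkey]
    exact dot_self_pos cB hcBne
end

section
/- Let X be a real 3×3 matrix of rank 2, let t span its left kernel and e₁ := adj(X)·t span its right kernel, and let (uᵢ, vᵢ), (uⱼ, vⱼ) be pairs of vectors in ℝ³ with vᵢᵀ X uᵢ = 0 = vⱼᵀ X uⱼ. Define D_{ij} := det[uᵢ uⱼ e₁]·det[vᵢ vⱼ t] and g_l := vₗᵀ[-t]ₓ X uₗ for l ∈ {i,j}. If D_{ij} ≠ 0, then sign(D_{ij}) = sign(gᵢ·gⱼ). -/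
open Matrix

set_option maxHeartbeats 2000000

/-- The determinant of the 3×3 matrix with columns `a`, `b`, `e`. -/
def colDet (a b e : Fin 3 → ℝ) : ℝ :=
  (Matrix.of fun (i : Fin 3) (j : Fin 3) => ![a, b, e] j i).det

lemma colDet_eq (a b e : Fin 3 → ℝ) :
    colDet a b e = a 0*b 1*e 2 + a 1*b 2*e 0 + a 2*b 0*e 1
      - a 0*b 2*e 1 - a 1*b 0*e 2 - a 2*b 1*e 0 := by
  simp [colDet, Matrix.det_fin_three]
  ring

/-- Master algebraic identity. -/
lemma master (t w z a b : Fin 3 → ℝ)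
    (h1 : t ⬝ᵥ w = 0) (h2 : t ⬝ᵥ z = 0) (h3 : a ⬝ᵥ w = 0) (h4 : b ⬝ᵥ z = 0) :
    (-(colDet a t w)) * (-(colDet b t z)) * ((w ⬝ᵥ w) * (z ⬝ᵥ z) - (w ⬝ᵥ z)^2)
      = (w ⬝ᵥ w) * (z ⬝ᵥ z) * (colDet t w z * colDet a b t) := by
  simp only [dotProduct, Fin.sum_univ_three, colDet_eq] at h1 h2 h3 h4 ⊢
  linear_combination ((w 0*t 1*z 2 + w 1*t 2*z 0 + w 2*t 0*z 1 - w 0*t 2*z 1 - w 1*t 0*z 2 - w 2*t 1*z 0) * (z 0*z 0 + z 1*z 1 + z 2*z 2) * (b 0*t 1*w 2 + b 1*t 2*w 0 + b 2*t 0*w 1 - b 0*t 2*w 1 - b 1*t 0*w 2 - b 2*t 1*w 0)) * h3 + ((a 0*w 1*z 2 + a 1*w 2*z 0 + a 2*w 0*z 1 - a 0*w 2*z 1 - a 1*w 0*z 2 - a 2*w 1*z 0) * (z 0*z 0 + z 1*z 1 + z 2*z 2) * (b 0*t 1*w 2 + b 1*t 2*w 0 + b 2*t 0*w 1 - b 0*t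 2*w 1 - b 1*t 0*w 2 - b 2*t 1*w 0)) * h1 +
    ((w 0*z 0 + w 1*z 1 + w 2*z 2) * (a 0*t 1*w 2 + a 1*t 2*w 0 + a 2*t 0*w 1 - a 0*t 2*w 1 - a 1*t 0*w 2 - a 2*t 1*w 0) * (z 0*t 1*w 2 + z 1*t 2*w 0 + z 2*t 0*w 1 - z 0*t 2*w 1 - z 1*t 0*w 2 - z 2*t 1*w 0)) * h4 + ((w 0*z 0 + w 1*z 1 + w 2*z 2) * (a 0*t 1*w 2 + a 1*t 2*w 0 + a 2*t 0*w 1 - a 0*t 2*w 1 - a 1*t 0*w 2 - a 2*t 1*w 0) * (b 0*z 1*w 2 + b 1*z 2*w 0 + b 2*z 0*w 1 - b 0*z 2*w 1 - b 1*z 0*w 2 - b 2*z 1*w 0)) * h2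

theorem sign_D_eq_sign_gigj (X : Matrix (Fin 3) (Fin 3) ℝ) (hX : X.rank = 2)
    (t : Fin 3 → ℝ) (ht : t ≠ 0) (htX : X.vecMul t = 0)
    (ui vi uj vj : Fin 3 → ℝ)
    (hi : vi ⬝ᵥ X.mulVec ui = 0) (hj : vj ⬝ᵥ X.mulVec uj = 0)
    (hD : colDet ui uj (X.adjugate.mulVec t) * colDet vi vj t ≠ 0) :
    Real.sign (colDet ui uj (X.adjugate.mulVec t) * colDet vi vj t) =
      Real.sign ((vi ⬝ᵥ (crossMat (-t) * X).mulVec ui) *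
        (vj ⬝ᵥ (crossMat (-t) * X).mulVec uj)) := by
  have htw : t ⬝ᵥ X.mulVec ui = 0 := by
    rw [Matrix.dotProduct_mulVec, htX, zero_dotProduct]
  have htz : t ⬝ᵥ X.mulVec uj = 0 := by
    rw [Matrix.dotProduct_mulVec, htX, zero_dotProduct]
  have hE : colDet ui uj (X.adjugate.mulVec t)
      = colDet t (X.mulVec ui) (X.mulVec uj) := by
    simp only [colDet_eq, Matrix.adjugate_fin_three, Matrix.mulVec, dotProduct,
      Fin.sum_univ_three, Matrix.cons_val', Matrix.cons_val_zero, Matrix.cons_val_one,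
      Matrix.head_cons, Matrix.empty_val', Matrix.cons_val_fin_one, Matrix.head_fin_const,
      Matrix.cons_val_two, Matrix.tail_cons, Matrix.of_apply]
    ring
  have hgi : vi ⬝ᵥ (crossMat (-t) * X).mulVec ui
      = -(colDet vi t (X.mulVec ui)) := by
    simp only [crossMat, colDet_eq, Matrix.mulVec, Matrix.mul_apply, dotProduct,
      Fin.sum_univ_three, Matrix.cons_val', Matrix.cons_val_zero, Matrix.cons_val_one,
      Matrix.head_cons, Matrix.empty_val', Matrix.cons_val_fin_one, Matrix.head_fin_const,
      Matrix.cons_val_two, Matrix.tail_cons, Matrix.of_apply, Pi.neg_apply]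
    ring
  have hgj : vj ⬝ᵥ (crossMat (-t) * X).mulVec uj
      = -(colDet vj t (X.mulVec uj)) := by
    simp only [crossMat, colDet_eq, Matrix.mulVec, Matrix.mul_apply, dotProduct,
      Fin.sum_univ_three, Matrix.cons_val', Matrix.cons_val_zero, Matrix.cons_val_one,
      Matrix.head_cons, Matrix.empty_val', Matrix.cons_val_fin_one, Matrix.head_fin_const,
      Matrix.cons_val_two, Matrix.tail_cons, Matrix.of_apply, Pi.neg_apply]
    ring
  have key := master t (X.mulVec ui) (X.mulVec uj) vi vj htw htz hi hj
  rw [hE] at hD ⊢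
  rw [hgi, hgj]
  set w : Fin 3 → ℝ := X.mulVec ui with hw
  set z : Fin 3 → ℝ := X.mulVec uj with hz
  set E : ℝ := colDet t w z with hE'
  set V : ℝ := colDet vi vj t with hV'
  have hEne : E ≠ 0 := fun h => hD (by rw [h, zero_mul])
  -- cross product components of w × z
  set c0 : ℝ := w 1 * z 2 - w 2 * z 1 with hc0
  set c1 : ℝ := w 2 * z 0 - w 0 * z 2 with hc1
  set c2 : ℝ := w 0 * z 1 - w 1 * z 0 with hc2
  have hKc : (w ⬝ᵥ w) * (z ⬝ᵥ z) - (w ⬝ᵥ z)^2 = c0^2 + c1^2 + c2^2 := by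
    simp only [dotProduct, Fin.sum_univ_three, hc0, hc1, hc2]
    ring
  have hEc : E = t 0 * c0 + t 1 * c1 + t 2 * c2 := by
    simp only [hE', colDet_eq, hc0, hc1, hc2]
    ring
  have hKpos : 0 < (w ⬝ᵥ w) * (z ⬝ᵥ z) - (w ⬝ᵥ z)^2 := by
    rcases lt_or_ge 0 ((w ⬝ᵥ w) * (z ⬝ᵥ z) - (w ⬝ᵥ z)^2) with h | h
    · exact h
    · exfalso
      rw [hKc] at h
      have h0 : c0 = 0 := by nlinarith [sq_nonneg c0, sq_nonneg c1, sq_nonneg c2]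
      have h1 : c1 = 0 := by nlinarith [sq_nonneg c0, sq_nonneg c1, sq_nonneg c2]
      have h2 : c2 = 0 := by nlinarith [sq_nonneg c0, sq_nonneg c1, sq_nonneg c2]
      exact hEne (by rw [hEc, h0, h1, h2]; ring)
  have hPpos : 0 < (w ⬝ᵥ w) * (z ⬝ᵥ z) := by
    nlinarith [sq_nonneg (w ⬝ᵥ z)]
  rcases hD.lt_or_gt with hneg | hpos
  · have hGK : -(colDet vi t w) * -(colDet vj t z) * ((w ⬝ᵥ w) * (z ⬝ᵥ z) - (w ⬝ᵥ z)^2) < 0 := by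
      rw [key]
      exact mul_neg_of_pos_of_neg hPpos hneg
    have hG : -(colDet vi t w) * -(colDet vj t z) < 0 := by
      nlinarith [hGK, hKpos]
    rw [Real.sign_of_neg hneg, Real.sign_of_neg hG]
  · have hGK : 0 < -(colDet vi t w) * -(colDet vj t z) * ((w ⬝ᵥ w) * (z ⬝ᵥ z) - (w ⬝ᵥ z)^2) := by
      rw [key]
      exact mul_pos hPpos hpos
    have hG : 0 < -(colDet vi t w) * -(colDet vj t z) := by
      nlinarith [hGK, hKpos]
    rw [Real.sign_of_pos hpos, Real.sign_of_pos hG]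
end
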